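/- arXiv:1201.3221 — 3 statements merged into one kernel-verified Lean document; each statement's English description precedes it below -/
import Mathlib

section
/- Any symmetric matrix of rank r over a field has an invertible r × r principal submatrix. -/
/-!
Take rows indexed by `s` forming a basis of the row space; by symmetry the columns indexed by `s`
span the column space. A combination of the rows in `s` that vanishes on the columns in `s`
then vanishes on every column, hence is zero, so its coefficients are zero: the rows of the
principal submatrix on `s` are independent.
-/

namespace Matrix

variable {m n K : Type*}

theorem vecMul_eq_zero_of_col_mem_span [CommSemiring K] [Fintype m] {A : Matrix m n K}
    {t : Set n} (ht : ∀ j, A.col j ∈ Submodule.span K (A.col '' t)) {x : m → K}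
    (hx : ∀ j ∈ t, (x ᵥ* A) j = 0) : x ᵥ* A = 0 := by
  have hker : Submodule.span K (A.col '' t) ≤ LinearMap.ker (dotProductBilin K K x) :=
    Submodule.span_le.mpr (by rintro _ ⟨j, hj, rfl⟩; exact hx j hj)
  funext j
  exact hker (ht j)

theorem linearIndependent_row_submatrix_of_col_mem_span [CommRing K] {A : Matrix m n K}
    {s : Set m} [Fintype s] {t : Set n} (hs : LinearIndepOn K A.row s)
    (ht : ∀ j, A.col j ∈ Submodule.span K (A.col '' t)) :
    LinearIndependent K (A.submatrix ((↑) : s → m) ((↑) : t → n)).row := by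
  set B := A.submatrix ((↑) : s → m) id
  have hB : ∀ j, B.col j ∈ Submodule.span K (B.col '' t) := fun j => by
    have h :=
      Submodule.apply_mem_span_image_of_mem_span (LinearMap.funLeft K K ((↑) : s → m)) (ht j)
    rw [Set.image_image] at h
    exact h
  have hBinj : Function.Injective B.vecMul := vecMul_injective_iff.mpr hs
  rw [← vecMul_injective_iff, ← coe_vecMulLinear, ← LinearMap.ker_eq_bot, LinearMap.ker_eq_bot']
  intro x hx
  refine hBinj ((vecMul_eq_zero_of_col_mem_span hB fun j hj => ?_).trans (zero_vecMul B).symm)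
  exact congrFun hx ⟨j, hj⟩

theorem det_submatrix_ne_zero_of_linearIndepOn_row [Field K] [DecidableEq m] {A : Matrix m m K}
    {s : Finset m} (hs : LinearIndepOn K A.row s)
    (hcol : ∀ j, A.col j ∈ Submodule.span K (A.col '' s)) :
    (A.submatrix ((↑) : s → m) ((↑) : s → m)).det ≠ 0 :=
  ((isUnit_iff_isUnit_det _).mp (linearIndependent_rows_iff_isUnit.mp
    (linearIndependent_row_submatrix_of_col_mem_span hs hcol))).ne_zero

theorem exists_finset_card_eq_rank_linearIndepOn_row [Field K] [Fintype m] [Fintype n]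
    (A : Matrix m n K) :
    ∃ s : Finset m, s.card = A.rank ∧ LinearIndepOn K A.row s ∧
      ∀ i, A.row i ∈ Submodule.span K (A.row '' s) := by
  obtain ⟨b, -, -, hspan, hli⟩ :=
    exists_linearIndepOn_extension (linearIndepOn_empty K A.row) (Set.empty_subset Set.univ)
  have hb : b.Finite := b.toFinite
  have hrow : ∀ i, A.row i ∈ Submodule.span K (A.row '' b) := fun i => hspan ⟨i, trivial, rfl⟩
  have hspan_eq : Submodule.span K (Set.range A.row) = Submodule.span K (A.row '' b) :=
    le_antisymm (Submodule.span_le.mpr (Set.range_subset_iff.mpr hrow))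
      (Submodule.span_mono (Set.image_subset_range _ _))
  refine ⟨hb.toFinset, ?_, by rwa [hb.coe_toFinset], by rwa [hb.coe_toFinset]⟩
  have := hb.fintype
  rw [rank_eq_finrank_span_row, hspan_eq, Set.image_eq_range, finrank_span_eq_card hli,
    hb.card_toFinset]

end Matrix

open Matrix

theorem stmt6 {n : Type*} [Fintype n] [DecidableEq n] {K : Type*} [Field K]
    (M : Matrix n n K) (hM : M.IsSymm) (r : ℕ) (hr : M.rank = r) :
    ∃ s : Finset n, s.card = r ∧
      (M.submatrix (fun i : s => (i : n)) (fun i : s => (i : n))).det ≠ 0 := by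
  obtain ⟨s, hcard, hli, hrow⟩ := M.exists_finset_card_eq_rank_linearIndepOn_row
  have hcol : M.col = M.row := by rw [← row_transpose, hM.eq]
  exact ⟨s, hcard.trans hr, det_submatrix_ne_zero_of_linearIndepOn_row hli (hcol ▸ hrow)⟩
end

section
/- Let G be a connected graph of order n with 0-1 incidence matrix X, let S be a set of n-1 edges of G, and A the adjacency matrix of the line graph. Then over GF(2), det(A(S,S)) equals n mod 2 if the subgraph induced by S is a spanning tree of G, and 0 otherwise. -/
open SimpleGraph Matrix

open Classical in
/-- The adjacency matrix of the line graph of `G`, over the field with two elements. -/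
noncomputable def lineAdjMat2 {V : Type*} [Fintype V] [DecidableEq V] (G : SimpleGraph V)
    [Fintype G.edgeSet] : Matrix G.edgeSet G.edgeSet (ZMod 2) :=
  fun e f => if G.lineGraph.Adj e f then 1 else 0

/-! Over `GF(2)` the identity `A + 2I = XᵀX` reads `A = XᵀX`, so `A(S,S) = NᵀN` where `N` is the
incidence matrix of `⟨S⟩`. The range of `N` lies in the hyperplane of vectors with coordinate sum
zero, and it contains `e_u + e_w` exactly when `u` and `w` are joined in `⟨S⟩`; as `N` has
`n - 1` columns, it is injective exactly when `⟨S⟩` is connected, i.e. a tree. Otherwise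
`NᵀN` inherits a kernel vector from `N`. For a tree, `NᵀN x = 0` says that `Nx` is constant, and
the all-ones vector lies in the range of `N` exactly when `n` is even. -/

section Incidence

variable {V : Type*} [DecidableEq V]

def incVec (e : Sym2 V) : V → ZMod 2 := fun v => if v ∈ e then 1 else 0

lemma incVec_mk {a b : V} (hab : a ≠ b) : incVec s(a, b) = Pi.single a 1 + Pi.single b 1 := by
  ext v
  by_cases ha : v = a <;> by_cases hb : v = b <;> simp_all [incVec]

lemma incVec_dotProduct_mk [Fintype V] {a b : V} (hab : a ≠ b) (y : V → ZMod 2) :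
    incVec s(a, b) ⬝ᵥ y = y a + y b := by
  rw [incVec_mk hab, add_dotProduct, single_one_dotProduct, single_one_dotProduct]

lemma incVec_dotProduct_incVec [Fintype V] {G : SimpleGraph V} [Fintype G.edgeSet]
    (e f : G.edgeSet) : incVec (e : Sym2 V) ⬝ᵥ incVec (f : Sym2 V) = lineAdjMat2 G e f := by
  obtain ⟨e, he⟩ := e
  induction e using Sym2.ind with
  | _ a b =>
  have hab : a ≠ b := (G.mem_edgeSet.mp he).ne
  rw [incVec_dotProduct_mk hab, lineAdjMat2]
  simp only [lineGraph_adj_iff_exists, incVec, Sym2.mem_iff]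
  by_cases hef : (⟨s(a, b), he⟩ : G.edgeSet) = f
  · subst hef
    simp [CharTwo.add_self_eq_zero]
  · have hf : ¬ (a ∈ (f : Sym2 V) ∧ b ∈ (f : Sym2 V)) := fun h =>
      hef (Subtype.ext ((Sym2.mem_and_mem_iff hab).mp h).symm)
    by_cases ha : a ∈ (f : Sym2 V) <;> by_cases hb : b ∈ (f : Sym2 V) <;> simp_all

end Incidence

section CoordSum

variable {V : Type*} [Fintype V]

noncomputable def coordSum : Module.Dual (ZMod 2) (V → ZMod 2) :=
  dotProductBilin (ZMod 2) (ZMod 2) 1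

lemma coordSum_apply (y : V → ZMod 2) : coordSum y = ∑ v, y v := by
  simp [coordSum, dotProduct]

lemma finrank_ker_coordSum [Nonempty V] :
    Module.finrank (ZMod 2) (LinearMap.ker (coordSum : Module.Dual (ZMod 2) (V → ZMod 2))) + 1 =
      Fintype.card V := by
  classical
  have hne : (coordSum : Module.Dual (ZMod 2) (V → ZMod 2)) ≠ 0 := fun h => by
    simpa [coordSum_apply] using LinearMap.congr_fun h (Pi.single (Classical.arbitrary V) 1)
  rw [Module.Dual.finrank_ker_add_one_of_ne_zero hne, Module.finrank_fintype_fun_eq_card]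

end CoordSum

namespace SimpleGraph

lemma Reachable.apply_eq_of_forall_adj {V β : Type*} {H : SimpleGraph V} {y : V → β}
    (hy : ∀ a b, H.Adj a b → y a = y b) {u w : V} (h : H.Reachable u w) : y u = y w := by
  obtain ⟨p⟩ := h
  induction p with
  | nil => rfl
  | cons hab _ ih => exact (hy _ _ hab).trans ih

variable {V : Type*} [DecidableEq V]

def incMat2 (H : SimpleGraph V) : Matrix V H.edgeSet (ZMod 2) :=
  Matrix.of fun v e => incVec (e : Sym2 V) v

lemma Reachable.single_add_single_mem_range_incMat2 {H : SimpleGraph V} [Fintype H.edgeSet]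
    {u w : V} (h : H.Reachable u w) :
    Pi.single u 1 + Pi.single w 1 ∈ LinearMap.range H.incMat2.mulVecLin := by
  obtain ⟨p⟩ := h
  induction p with
  | nil =>
    rw [← Pi.single_add, CharTwo.add_self_eq_zero, Pi.single_zero]
    exact Submodule.zero_mem _
  | @cons a b c hab _ ih =>
    have hcol : Pi.single a 1 + Pi.single b 1 ∈ LinearMap.range H.incMat2.mulVecLin :=
      ⟨Pi.single ⟨s(a, b), hab⟩ 1, by
        rw [mulVecLin_apply, mulVec_single_one]
        exact incVec_mk hab.ne⟩
    convert Submodule.add_mem _ hcol ih using 1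
    rw [add_assoc, ← add_assoc (Pi.single b 1), ← Pi.single_add, CharTwo.add_self_eq_zero,
      Pi.single_zero, zero_add]

variable [Fintype V]

lemma transpose_incMat2_mulVec_eq_zero_iff {H : SimpleGraph V} {y : V → ZMod 2} :
    H.incMat2ᵀ *ᵥ y = 0 ↔ ∀ a b, H.Adj a b → y a = y b := by
  have key : ∀ a b (hab : H.Adj a b), (H.incMat2ᵀ *ᵥ y) ⟨s(a, b), hab⟩ = y a + y b :=
    fun a b hab => incVec_dotProduct_mk hab.ne y
  refine ⟨fun h a b hab => ?_, fun h => funext fun ⟨e, he⟩ => ?_⟩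
  · rw [← CharTwo.add_eq_zero, ← key a b hab, h, Pi.zero_apply]
  · induction e using Sym2.ind with
    | _ a b => rw [key a b he, h a b he, CharTwo.add_self_eq_zero, Pi.zero_apply]

lemma lineAdjMat2_eq_transpose_mul_incMat2 (G : SimpleGraph V) [Fintype G.edgeSet] :
    lineAdjMat2 G = G.incMat2ᵀ * G.incMat2 :=
  Matrix.ext fun e f => (incVec_dotProduct_incVec e f).symm

variable {H : SimpleGraph V} [Fintype H.edgeSet]

lemma dotProduct_eq_zero_of_mem_range_incMat2 {y z : V → ZMod 2}
    (hy : y ∈ LinearMap.range H.incMat2.mulVecLin) (hz : ∀ a b, H.Adj a b → z a = z b) :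
    z ⬝ᵥ y = 0 := by
  obtain ⟨x, rfl⟩ := hy
  rw [mulVecLin_apply, dotProduct_mulVec, ← mulVec_transpose,
    transpose_incMat2_mulVec_eq_zero_iff.mpr hz, zero_dotProduct]

lemma range_incMat2_le_ker_coordSum :
    LinearMap.range H.incMat2.mulVecLin ≤ LinearMap.ker coordSum := fun _ hy =>
  dotProduct_eq_zero_of_mem_range_incMat2 hy fun _ _ _ => rfl

lemma single_add_single_mem_range_incMat2_iff {u w : V} :
    Pi.single u 1 + Pi.single w 1 ∈ LinearMap.range H.incMat2.mulVecLin ↔ H.Reachable u w := by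
  classical
  refine ⟨fun h => ?_, Reachable.single_add_single_mem_range_incMat2⟩
  by_contra huw
  let z : V → ZMod 2 := fun v => if H.Reachable u v then 1 else 0
  have hz : ∀ a b, H.Adj a b → z a = z b := fun a b hab => by
    have : H.Reachable u a ↔ H.Reachable u b :=
      ⟨fun h => h.trans hab.reachable, fun h => h.trans hab.symm.reachable⟩
    simp only [z, this]
  have := dotProduct_eq_zero_of_mem_range_incMat2 h hz
  simp [z, dotProduct_add, huw] at this

lemma Preconnected.range_incMat2 (hH : H.Preconnected) :
    LinearMap.range H.incMat2.mulVecLin = LinearMap.ker coordSum := by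
  refine range_incMat2_le_ker_coordSum.antisymm fun y hy => ?_
  rcases isEmpty_or_nonempty V with hV | ⟨⟨v₀⟩⟩
  · rw [Subsingleton.elim y 0]
    exact Submodule.zero_mem _
  have hy : ∑ v, y v • (Pi.single v 1 + Pi.single v₀ 1) = y := by
    rw [LinearMap.mem_ker, coordSum_apply] at hy
    rw [Finset.sum_congr rfl fun v _ => smul_add (y v) _ _, Finset.sum_add_distrib,
      ← Finset.sum_smul, hy, zero_smul, add_zero]
    conv_rhs => rw [← Finset.univ_sum_single y]
    exact Finset.sum_congr rfl fun v _ => by rw [← Pi.single_smul, smul_eq_mul, mul_one]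
  rw [← hy]
  exact Submodule.sum_mem _ fun v _ =>
    Submodule.smul_mem _ _ (hH v v₀).single_add_single_mem_range_incMat2

lemma ker_incMat2_eq_bot_iff_preconnected [Nonempty V]
    (hcard : Nat.card H.edgeSet + 1 = Fintype.card V) :
    LinearMap.ker H.incMat2.mulVecLin = ⊥ ↔ H.Preconnected := by
  have hrank := LinearMap.finrank_range_add_finrank_ker H.incMat2.mulVecLin
  rw [Module.finrank_fintype_fun_eq_card, ← Nat.card_eq_fintype_card] at hrank
  have hsum := finrank_ker_coordSum (V := V)
  rw [← Submodule.finrank_eq_zero]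
  constructor
  · intro hker u w
    have hrange : LinearMap.range H.incMat2.mulVecLin = LinearMap.ker coordSum :=
      Submodule.eq_of_le_of_finrank_eq range_incMat2_le_ker_coordSum (by omega)
    rw [← single_add_single_mem_range_incMat2_iff, hrange, LinearMap.mem_ker, map_add,
      coordSum_apply, coordSum_apply]
    simp only [Finset.sum_pi_single', Finset.mem_univ, if_true]
    decide
  · intro hH
    rw [← hH.range_incMat2] at hsum
    omega

lemma det_transpose_mul_incMat2_eq_zero_of_not_isTree (hT : ¬ H.IsTree)
    (hcard : Nat.card H.edgeSet + 1 = Fintype.card V) : (H.incMat2ᵀ * H.incMat2).det = 0 := by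
  have : Nonempty V := Fintype.card_pos_iff.mp (by omega)
  have hker : LinearMap.ker H.incMat2.mulVecLin ≠ ⊥ := by
    rw [Ne, ker_incMat2_eq_bot_iff_preconnected hcard]
    refine fun hH => hT (isTree_iff_connected_and_card.mpr ⟨⟨hH⟩, ?_⟩)
    rwa [Nat.card_eq_fintype_card (α := V)]
  obtain ⟨x, hx, hx0⟩ := Submodule.exists_mem_ne_zero_of_ne_bot hker
  refine exists_mulVec_eq_zero_iff.mp ⟨x, hx0, ?_⟩
  rw [← mulVec_mulVec, show H.incMat2 *ᵥ x = 0 from hx, mulVec_zero]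

lemma Connected.det_transpose_mul_incMat2_eq_zero_iff (hH : H.Connected)
    (hker : LinearMap.ker H.incMat2.mulVecLin = ⊥) :
    (H.incMat2ᵀ * H.incMat2).det = 0 ↔ (Fintype.card V : ZMod 2) = 0 := by
  obtain ⟨v₀⟩ := hH.nonempty
  rw [← exists_mulVec_eq_zero_iff]
  constructor
  · rintro ⟨x, hx0, hx⟩
    rw [← mulVec_mulVec, transpose_incMat2_mulVec_eq_zero_iff] at hx
    have hconst : ∀ v, (H.incMat2 *ᵥ x) v = (H.incMat2 *ᵥ x) v₀ := fun v =>
      (hH.preconnected v v₀).apply_eq_of_forall_adj hx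
    have hsum : coordSum (H.incMat2 *ᵥ x) = 0 := range_incMat2_le_ker_coordSum ⟨x, rfl⟩
    rw [coordSum_apply, Finset.sum_congr rfl fun v _ => hconst v, Finset.sum_const,
      Finset.card_univ, nsmul_eq_mul] at hsum
    by_contra hn
    refine hx0 (ker_mulVecLin_eq_bot_iff.mp hker x (funext fun v => ?_))
    rw [hconst, (mul_eq_zero.mp hsum).resolve_left hn, Pi.zero_apply]
  · intro hn
    have hones : (fun _ => 1) ∈ LinearMap.range H.incMat2.mulVecLin := by
      rw [hH.preconnected.range_incMat2, LinearMap.mem_ker, coordSum_apply]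
      simpa using hn
    obtain ⟨x, hx⟩ := hones
    rw [mulVecLin_apply] at hx
    refine ⟨x, ?_, ?_⟩
    · rintro rfl
      simpa using congr_fun hx v₀
    · rw [← mulVec_mulVec, hx]
      exact transpose_incMat2_mulVec_eq_zero_iff.mpr fun _ _ _ => rfl

lemma IsTree.det_transpose_mul_incMat2 (hT : H.IsTree) :
    (H.incMat2ᵀ * H.incMat2).det = Fintype.card V := by
  have hcard : Nat.card H.edgeSet + 1 = Fintype.card V := by
    rw [← Nat.card_eq_fintype_card]
    exact (isTree_iff_connected_and_card.mp hT).2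
  have : Nonempty V := hT.connected.nonempty
  have hker := (ker_incMat2_eq_bot_iff_preconnected hcard).mpr hT.connected.preconnected
  have eq_of_eq_zero_iff : ∀ a b : ZMod 2, (a = 0 ↔ b = 0) → a = b := by decide
  exact eq_of_eq_zero_iff _ _ (hT.connected.det_transpose_mul_incMat2_eq_zero_iff hker)

noncomputable def finsetEquivEdgeSetFromEdgeSet {G : SimpleGraph V} (S : Finset G.edgeSet) :
    S ≃ (fromEdgeSet ((S.image (fun e : G.edgeSet => (e : Sym2 V)) : Finset (Sym2 V)) :
      Set (Sym2 V))).edgeSet :=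
  Equiv.ofBijective (fun e => ⟨e.1.1, by
      rw [edgeSet_fromEdgeSet]
      exact ⟨Finset.mem_image_of_mem _ e.2, G.not_isDiag_of_mem_edgeSet e.1.2⟩⟩)
    ⟨fun e f h => Subtype.ext <| Subtype.ext <| by simpa using congrArg Subtype.val h,
      fun ⟨q, hq⟩ => by
        rw [edgeSet_fromEdgeSet] at hq
        obtain ⟨e, he, rfl⟩ := Finset.mem_image.mp hq.1
        exact ⟨⟨e, he⟩, rfl⟩⟩

lemma det_submatrix_lineAdjMat2 {G : SimpleGraph V} [Fintype G.edgeSet] (S : Finset G.edgeSet)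
    (hH : H = fromEdgeSet
      ((S.image (fun e : G.edgeSet => (e : Sym2 V)) : Finset (Sym2 V)) : Set (Sym2 V))) :
    ((lineAdjMat2 G).submatrix (fun i : S => (i : G.edgeSet)) (fun i : S => (i : G.edgeSet))).det =
      (H.incMat2ᵀ * H.incMat2).det := by
  subst hH
  rw [lineAdjMat2_eq_transpose_mul_incMat2,
    ← det_submatrix_equiv_self (finsetEquivEdgeSetFromEdgeSet S)]
  rfl

end SimpleGraph

theorem stmt9 {V : Type*} [Fintype V] [DecidableEq V] (G : SimpleGraph V)
    [Fintype G.edgeSet] (hG : G.Connected) (n : ℕ) (hn : Fintype.card V = n)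
    (S : Finset G.edgeSet) (hS : S.card = n - 1)
    -- `⟨S⟩` : the spanning subgraph of `G` with edge set `S`
    (HS : SimpleGraph V)
    (hHS : HS = SimpleGraph.fromEdgeSet
      ((S.image (fun e : G.edgeSet => (e : Sym2 V)) : Finset (Sym2 V)) : Set (Sym2 V))) :
    (HS.IsTree →
        ((lineAdjMat2 G).submatrix (fun i : S => (i : G.edgeSet))
          (fun i : S => (i : G.edgeSet))).det = (n : ZMod 2)) ∧
    (¬ HS.IsTree →
        ((lineAdjMat2 G).submatrix (fun i : S => (i : G.edgeSet))
          (fun i : S => (i : G.edgeSet))).det = 0) := by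
  classical
  subst hn
  rw [det_submatrix_lineAdjMat2 S hHS]
  refine ⟨IsTree.det_transpose_mul_incMat2,
    fun hT => det_transpose_mul_incMat2_eq_zero_of_not_isTree hT ?_⟩
  have : 0 < Fintype.card V := Fintype.card_pos_iff.mpr hG.nonempty
  subst hHS
  rw [← Nat.card_congr (finsetEquivEdgeSetFromEdgeSet S), Nat.card_eq_fintype_card,
    Fintype.card_coe]
  omega
end

section
/- Let G be a connected unicyclic graph such that the adjacency matrix of the line graph of G has nullity exactly 2. Then the length of the unique cycle of G is divisible by 4. -/
open SimpleGraph Matrix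

open Classical in
/-- The adjacency matrix of the line graph of `G`. -/
noncomputable def lineAdjMat {V : Type*} [Fintype V] [DecidableEq V] (G : SimpleGraph V)
    [Fintype G.edgeSet] : Matrix G.edgeSet G.edgeSet ℝ :=
  fun e f => if G.lineGraph.Adj e f then 1 else 0

/-!
Write `A(L(G)) = BᵀB - 2` with `B` the vertex-edge incidence matrix. As `BᵀB` and
`BBᵀ = A(G) + D` have eigenspaces of equal dimension for the eigenvalue `2 ≠ 0`, the nullity of
`A(L(G))` is the dimension of the kernel of `A(G) + diag d` with `d = deg - 2`.
Pruning a leaf `v₀` with neighbour `u₀` from such a system preserves the kernel dimension if the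
potential at `u₀` is replaced by `d u₀ - (d v₀)⁻¹`; and if `d ≡ deg (mod 2)` `2`-adically, this
congruence survives the pruning. Once all leaves are gone, only isolated vertices and the cycle
`c₀ c₁ … cₙ = c₀` are left, with potentials `d ≡ 0 (mod 2)` on the cycle. A kernel of
dimension `2` means that the solution of `x_{i+2} = -x_i - d(c_{i+1}) x_{i+1}` with
`x₀ = 1, x₁ = 0` is periodic, so `x_n = 1`; but modulo `4` this solution is
`1, 0, -1, 0, 1, 0, …`, which forces `4 ∣ n`.
-/

open scoped Finset

section LinearAlgebra

theorem LinearMap.finrank_ker_comp_sub_smul_le {K M N : Type*} [Field K] [AddCommGroup M]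
    [Module K M] [AddCommGroup N] [Module K N] [FiniteDimensional K N]
    (f : M →ₗ[K] N) (g : N →ₗ[K] M) {c : K} (hc : c ≠ 0) :
    Module.finrank K (ker (g ∘ₗ f - c • LinearMap.id)) ≤
      Module.finrank K (ker (f ∘ₗ g - c • LinearMap.id)) := by
  have hmaps : ∀ x ∈ ker (g ∘ₗ f - c • LinearMap.id),
      f x ∈ ker (f ∘ₗ g - c • LinearMap.id) := by
    intro x hx
    simp only [LinearMap.mem_ker, LinearMap.sub_apply, LinearMap.comp_apply,
      LinearMap.smul_apply, LinearMap.id_apply, sub_eq_zero] at hx ⊢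
    rw [hx, map_smul]
  refine LinearMap.finrank_le_finrank_of_injective (f := f.restrict hmaps) fun x y hxy => ?_
  have hx := x.2
  have hy := y.2
  simp only [LinearMap.mem_ker, LinearMap.sub_apply, LinearMap.comp_apply,
    LinearMap.smul_apply, LinearMap.id_apply, sub_eq_zero] at hx hy
  have hfxy : f x = f y := congrArg Subtype.val hxy
  apply Subtype.ext
  rw [← smul_right_inj hc, ← hx, ← hy, hfxy]

theorem LinearMap.finrank_ker_comp_sub_smul_comm {K M N : Type*} [Field K] [AddCommGroup M]
    [Module K M] [AddCommGroup N] [Module K N] [FiniteDimensional K M] [FiniteDimensional K N]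
    (f : M →ₗ[K] N) (g : N →ₗ[K] M) {c : K} (hc : c ≠ 0) :
    Module.finrank K (ker (g ∘ₗ f - c • LinearMap.id)) =
      Module.finrank K (ker (f ∘ₗ g - c • LinearMap.id)) :=
  le_antisymm (finrank_ker_comp_sub_smul_le f g hc) (finrank_ker_comp_sub_smul_le g f hc)

theorem Matrix.finrank_ker_mul_sub_smul_comm {K m n : Type*} [Field K] [Fintype m]
    [DecidableEq m] [Fintype n] [DecidableEq n] (B : Matrix m n K) (C : Matrix n m K) {c : K}
    (hc : c ≠ 0) :
    Module.finrank K (LinearMap.ker (C * B - c • 1).mulVecLin) =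
      Module.finrank K (LinearMap.ker (B * C - c • 1).mulVecLin) := by
  have hCB : (C * B - c • 1).mulVecLin = C.mulVecLin ∘ₗ B.mulVecLin - c • LinearMap.id :=
    LinearMap.ext fun v => by simp
  have hBC : (B * C - c • 1).mulVecLin = B.mulVecLin ∘ₗ C.mulVecLin - c • LinearMap.id :=
    LinearMap.ext fun v => by simp
  rw [hCB, hBC]
  exact LinearMap.finrank_ker_comp_sub_smul_comm B.mulVecLin C.mulVecLin hc

end LinearAlgebra

section updateCoord

variable {V K : Type*} [DecidableEq V] [Field K] {a b : V}

variable (a b) in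
def updateCoord (c : K) : (V → K) →ₗ[K] (V → K) where
  toFun s := Function.update s a (c * s b)
  map_add' s t := by
    ext x
    rcases eq_or_ne x a with rfl | hx <;> simp [*, mul_add]
  map_smul' r s := by
    ext x
    rcases eq_or_ne x a with rfl | hx <;> simp [*, mul_left_comm]

theorem updateCoord_apply (c : K) (s : V → K) :
    updateCoord a b c s = Function.update s a (c * s b) := rfl

theorem updateCoord_updateCoord (hab : a ≠ b) (c c' : K) (s : V → K) :
    updateCoord a b c (updateCoord a b c' s) = updateCoord a b c s := by
  simp [updateCoord_apply, Function.update_of_ne hab.symm]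

theorem updateCoord_eq_self {c : K} {s : V → K} (h : s a = c * s b) :
    updateCoord a b c s = s := by
  simp [updateCoord_apply, ← h]

end updateCoord

section TwoAdic

theorem padicNorm_neg_sub_mul_le {p : ℕ} [Fact p.Prime] {a b c r : ℚ} (ha : padicNorm p a ≤ r)
    (hbc : padicNorm p b * padicNorm p c ≤ r) : padicNorm p (-a - b * c) ≤ r :=
  padicNorm.sub.trans (max_le (by rwa [padicNorm.neg]) (by rwa [padicNorm.mul]))

theorem padicNorm_two_two : padicNorm 2 (2 : ℚ) = 1 / 2 := by
  simpa using padicNorm.padicNorm_p_of_prime (p := 2)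

theorem padicNorm_neg_one_pow (p m : ℕ) [Fact p.Prime] : padicNorm p ((-1 : ℚ) ^ m) = 1 := by
  rcases neg_one_pow_eq_or ℚ m with h | h <;> simp [h]

theorem padicNorm_inv_sub_one {p : ℕ} [Fact p.Prime] {q : ℚ} (h : padicNorm p (q - 1) < 1) :
    q ≠ 0 ∧ padicNorm p (q⁻¹ - 1) = padicNorm p (q - 1) := by
  have hq : padicNorm p q = 1 := by
    have hne : padicNorm p (q - 1) ≠ padicNorm p 1 := by rw [padicNorm.one]; exact h.ne
    simpa [max_eq_right h.le] using padicNorm.add_eq_max_of_ne hne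
  have hq0 : q ≠ 0 := fun h0 => by simp [h0] at hq
  refine ⟨hq0, ?_⟩
  rw [show q⁻¹ - 1 = -(q - 1) / q by field_simp; ring, padicNorm.div, padicNorm.neg, hq, div_one]

def perturbedRec {R : Type*} [Ring R] (e : ℕ → R) : ℕ → R
  | 0 => 1
  | 1 => 0
  | i + 2 => -perturbedRec e i - e (i + 1) * perturbedRec e (i + 1)

theorem map_perturbedRec {R S : Type*} [Ring R] [Ring S] (f : R →+* S) (e : ℕ → R) :
    ∀ i, f (perturbedRec e i) = perturbedRec (f ∘ e) i
  | 0 => map_one f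
  | 1 => map_zero f
  | i + 2 => by
    simp only [perturbedRec, map_sub, map_neg, map_mul, map_perturbedRec f e i,
      map_perturbedRec f e (i + 1), Function.comp_apply]

theorem eq_of_perturbedRec_step {R : Type*} [Ring R] {e y z : ℕ → R} {n : ℕ}
    (hy : ∀ i, i + 2 ≤ n → y (i + 2) = -y i - e (i + 1) * y (i + 1))
    (hz : ∀ i, i + 2 ≤ n → z (i + 2) = -z i - e (i + 1) * z (i + 1))
    (h0 : y 0 = z 0) (h1 : y 1 = z 1) : ∀ i ≤ n, y i = z i := by
  intro i hi
  induction i using Nat.strong_induction_on with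
  | _ i ih =>
    match i with
    | 0 => exact h0
    | 1 => exact h1
    | i + 2 => rw [hy i hi, hz i hi, ih i (by omega) (by omega), ih (i + 1) (by omega) (by omega)]

variable {e : ℕ → ℚ}

theorem padicNorm_perturbedRec_le (he : ∀ i, padicNorm 2 (e i) ≤ 1 / 2) (m : ℕ) :
    padicNorm 2 (perturbedRec e (2 * m) - (-1) ^ m) ≤ 1 / 4 ∧
      padicNorm 2 (perturbedRec e (2 * m + 1)) ≤ 1 / 2 := by
  induction m with
  | zero => simp [perturbedRec]
  | succ m ih =>
    have heven : padicNorm 2 (perturbedRec e (2 * (m + 1)) - (-1) ^ (m + 1)) ≤ 1 / 4 := by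
      have hrec : perturbedRec e (2 * (m + 1)) - (-1) ^ (m + 1) =
          -(perturbedRec e (2 * m) - (-1) ^ m) - e (2 * m + 1) * perturbedRec e (2 * m + 1) := by
        rw [show 2 * (m + 1) = 2 * m + 2 by ring, perturbedRec, pow_succ]
        ring
      rw [hrec]
      refine padicNorm_neg_sub_mul_le ih.1 ?_
      nlinarith [he (2 * m + 1), ih.2, padicNorm.nonneg (p := 2) (e (2 * m + 1)),
        padicNorm.nonneg (p := 2) (perturbedRec e (2 * m + 1))]
    refine ⟨heven, ?_⟩
    have hint : padicNorm 2 (perturbedRec e (2 * m + 2)) ≤ 1 := by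
      have := padicNorm.nonarchimedean (p := 2)
        (q := perturbedRec e (2 * (m + 1)) - (-1) ^ (m + 1)) (r := (-1) ^ (m + 1))
      rw [sub_add_cancel, padicNorm_neg_one_pow] at this
      exact this.trans (max_le (heven.trans (by norm_num)) le_rfl)
    rw [show 2 * (m + 1) + 1 = 2 * m + 1 + 2 by ring, perturbedRec]
    refine padicNorm_neg_sub_mul_le ih.2 ?_
    nlinarith [he (2 * m + 2), padicNorm.nonneg (p := 2) (e (2 * m + 2)),
      padicNorm.nonneg (p := 2) (perturbedRec e (2 * m + 2))]

theorem four_dvd_of_perturbedRec_eq_one (he : ∀ i, padicNorm 2 (e i) ≤ 1 / 2) {n : ℕ}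
    (hn : perturbedRec e n = 1) : 4 ∣ n := by
  obtain ⟨m, rfl | rfl⟩ := Nat.even_or_odd' n
  · have h := (padicNorm_perturbedRec_le he m).1
    rw [hn] at h
    obtain ⟨k, rfl⟩ | hm := Nat.even_or_odd m
    · exact ⟨k, by ring⟩
    · rw [hm.neg_one_pow, sub_neg_eq_add, one_add_one_eq_two, padicNorm_two_two] at h
      norm_num at h
  · have h := (padicNorm_perturbedRec_le he m).2
    rw [hn, padicNorm.one] at h
    norm_num at h

end TwoAdic

namespace SimpleGraph

variable {V : Type*} {G : SimpleGraph V}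

section Degree

theorem Walk.IsCycle.getVert_ne_getVert_add_two {v : V} {w : G.Walk v v} (hw : w.IsCycle)
    {i : ℕ} (hi : i + 2 ≤ w.length) : w.getVert i ≠ w.getVert (i + 2) := by
  simpa using hw.getVert_sub_one_ne_getVert_add_one (i := i + 1) (by omega)

theorem Walk.mem_edgeSet_deleteIncidenceSet {a b x : V} {p : G.Walk a b} (hx : x ∉ p.support)
    {e : Sym2 V} (he : e ∈ p.edges) : e ∈ (G.deleteIncidenceSet x).edgeSet := by
  rw [edgeSet_deleteIncidenceSet]
  exact ⟨p.edges_subset_edgeSet he, fun hinc => hx (Walk.mem_support_of_mem_edges he hinc.2)⟩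

variable [Fintype V] [DecidableRel G.Adj]

theorem adj_of_neighborFinset_eq_singleton {a b : V} (h : G.neighborFinset a = {b}) : G.Adj a b :=
  (mem_neighborFinset _ _ _).mp (h ▸ Finset.mem_singleton_self b)

theorem ncard_neighborSet_eq_degree (x : V) : (G.neighborSet x).ncard = G.degree x := by
  rw [← card_neighborFinset_eq_degree, ← Set.ncard_coe_finset, coe_neighborFinset]

theorem Subgraph.ncard_neighborSet_le_degree (H : G.Subgraph) (x : V) :
    (H.neighborSet x).ncard ≤ G.degree x :=
  ncard_neighborSet_eq_degree (G := G) x ▸ Set.ncard_le_ncard (H.neighborSet_subset x)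

theorem Walk.IsCycle.two_le_degree {v x : V} {w : G.Walk v v} (hw : w.IsCycle)
    (hx : x ∈ w.support) : 2 ≤ G.degree x :=
  hw.ncard_neighborSet_toSubgraph_eq_two hx ▸ w.toSubgraph.ncard_neighborSet_le_degree x

theorem Walk.IsPath.two_le_degree {a b x : V} {p : G.Walk a b} (hp : p.IsPath)
    (hx : x ∈ p.support) (ha : x ≠ a) (hb : x ≠ b) : 2 ≤ G.degree x := by
  obtain ⟨i, rfl, hi⟩ := Walk.mem_support_iff_exists_getVert.mp hx
  have hi0 : i ≠ 0 := by rintro rfl; exact ha p.getVert_zero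
  have hil : i < p.length := lt_of_le_of_ne hi (by rintro rfl; exact hb p.getVert_length)
  exact hp.ncard_neighborSet_toSubgraph_internal_eq_two hi0 hil ▸
    p.toSubgraph.ncard_neighborSet_le_degree _

theorem Walk.IsCycle.toSubgraph_adj_of_degree_le_two {v y z : V} {w : G.Walk v v}
    (hw : w.IsCycle) (hy : y ∈ w.support) (hdeg : G.degree y ≤ 2) (h : G.Adj y z) :
    w.toSubgraph.Adj y z := by
  have heq : w.toSubgraph.neighborSet y = G.neighborSet y :=
    Set.eq_of_subset_of_ncard_le (w.toSubgraph.neighborSet_subset y)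
      (by rwa [hw.ncard_neighborSet_toSubgraph_eq_two hy, ncard_neighborSet_eq_degree])
  show z ∈ w.toSubgraph.neighborSet y
  rwa [heq]

theorem Walk.IsCycle.exists_getVert_eq_of_reachable {v x : V} {w : G.Walk v v} (hw : w.IsCycle)
    (hdeg : ∀ y, G.degree y ≤ 2) (hx : G.Reachable v x) : ∃ i, w.getVert i = x ∧ i ≤ w.length :=
  Walk.mem_support_iff_exists_getVert.mp <| w.mem_verts_toSubgraph.mp <|
    hx.mem_subgraphVerts
      (fun y hy _ => hw.toSubgraph_adj_of_degree_le_two (w.mem_verts_toSubgraph.mp hy) (hdeg y))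
      (w.mem_verts_toSubgraph.mpr w.start_mem_support)

theorem degree_le_two_of_card_edgeFinset_eq (hcard : #G.edgeFinset = #{x | G.degree x ≠ 0})
    (hleaf : ∀ x, G.degree x ≠ 1) (x : V) : G.degree x ≤ 2 := by
  by_contra! hx
  have hsum : ∑ y ∈ {y | G.degree y ≠ 0}, G.degree y = 2 * #{y | G.degree y ≠ 0} := by
    rw [Finset.sum_filter_ne_zero, sum_degrees_eq_twice_card_edges, hcard]
  have hlt : ∑ _y ∈ {y | G.degree y ≠ 0}, 2 < ∑ y ∈ {y | G.degree y ≠ 0}, G.degree y :=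
    Finset.sum_lt_sum (fun y hy => by have := hleaf y; simp at hy; omega)
      ⟨x, by simp; omega, hx⟩
  simp only [Finset.sum_const, smul_eq_mul] at hlt
  omega

variable [DecidableEq V]

theorem Walk.IsCycle.neighborFinset_getVert_succ {v : V} {w : G.Walk v v} (hw : w.IsCycle)
    {i : ℕ} (hi : i + 2 ≤ w.length) (hdeg : G.degree (w.getVert (i + 1)) ≤ 2) :
    G.neighborFinset (w.getVert (i + 1)) = {w.getVert i, w.getVert (i + 2)} := by
  symm
  refine Finset.eq_of_subset_of_card_le (fun y hy => ?_) ?_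
  · rw [mem_neighborFinset]
    rcases Finset.mem_insert.mp hy with rfl | hy
    · exact (w.adj_getVert_succ (by omega)).symm
    · rw [Finset.mem_singleton.mp hy]
      exact w.adj_getVert_succ (by omega)
  · rwa [Finset.card_pair (hw.getVert_ne_getVert_add_two hi), card_neighborFinset_eq_degree]

theorem neighborFinset_deleteIncidenceSet (a x : V) :
    (G.deleteIncidenceSet a).neighborFinset x =
      if x = a then ∅ else (G.neighborFinset x).erase a := by
  ext y
  split_ifs with hx
  · simp [hx, deleteIncidenceSet_adj]
  · simp [deleteIncidenceSet_adj, hx, and_comm]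

theorem degree_deleteIncidenceSet_of_neighborFinset_eq {a b : V} (hN : G.neighborFinset a = {b})
    (x : V) : (G.deleteIncidenceSet a).degree x =
      if x = a then 0 else if x = b then G.degree b - 1 else G.degree x := by
  have hmem : a ∈ G.neighborFinset x ↔ x = b := by
    rw [mem_neighborFinset, adj_comm, ← mem_neighborFinset, hN, Finset.mem_singleton]
  rw [← card_neighborFinset_eq_degree, neighborFinset_deleteIncidenceSet]
  split_ifs with hxa hxb
  · rfl
  · subst hxb
    rw [Finset.card_erase_of_mem (hmem.mpr rfl), card_neighborFinset_eq_degree]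
  · rw [Finset.erase_eq_of_notMem (mt hmem.mp hxb), card_neighborFinset_eq_degree]

theorem degree_deleteIncidenceSet_ne_zero_iff {a b : V} (hN : G.neighborFinset a = {b})
    (hb : 2 ≤ G.degree b) (x : V) :
    (G.deleteIncidenceSet a).degree x ≠ 0 ↔ G.degree x ≠ 0 ∧ x ≠ a := by
  rw [degree_deleteIncidenceSet_of_neighborFinset_eq hN]
  split_ifs with hxa hxb
  · simp [hxa]
  · subst hxb
    simp only [ne_eq, (adj_of_neighborFinset_eq_singleton hN).ne.symm, not_false_eq_true, and_true]
    omega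
  · simp [hxa]

theorem Reachable.deleteIncidenceSet {a b x : V} (h : G.Reachable a b) (ha : a ≠ x) (hb : b ≠ x)
    (hx : G.degree x ≤ 1) : (G.deleteIncidenceSet x).Reachable a b := by
  let p := h.some.toPath
  have hxp : x ∉ p.1.support := fun hmem => by
    have := p.2.two_le_degree hmem ha.symm hb.symm
    omega
  exact ⟨p.1.transfer _ fun _ => Walk.mem_edgeSet_deleteIncidenceSet hxp⟩

end Degree

variable [Fintype V]

section LineGraph

variable [DecidableEq V] (G) [DecidableRel G.Adj]

theorem sum_incMatrix_mul_of_adj {R : Type*} [NonAssocSemiring R] {a b : V} (h : G.Adj a b)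
    (g : V → R) : ∑ v, G.incMatrix R v s(a, b) * g v = g a + g b := by
  rw [Fintype.sum_eq_add a b h.ne fun v hv => by
    simp [incMatrix_apply', mk'_mem_incidenceSet_iff, hv.1, hv.2]]
  simp [incMatrix_apply', mk'_mem_incidenceSet_iff, h]

noncomputable def edgeIncMatrix (R : Type*) [Zero R] [One R] : Matrix V G.edgeSet R :=
  of fun v e => G.incMatrix R v e

variable [Fintype G.edgeSet]

theorem lineAdjMat_eq_transpose_mul_sub :
    lineAdjMat G = (G.edgeIncMatrix ℝ)ᵀ * G.edgeIncMatrix ℝ - (2 : ℝ) • 1 := by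
  ext ⟨e, he⟩ ⟨f, hf⟩
  induction e using Sym2.ind with | _ a b => ?_
  have hab : G.Adj a b := he
  have hinc : ∀ v, G.incMatrix ℝ v f = if v ∈ f then 1 else 0 := fun v => by
    simp [incMatrix_apply', incidenceSet, hf]
  simp only [lineAdjMat, edgeIncMatrix, Matrix.sub_apply, Matrix.mul_apply, transpose_apply,
    of_apply, Matrix.smul_apply, one_apply, smul_eq_mul]
  rw [sum_incMatrix_mul_of_adj G hab, hinc, hinc, lineGraph_adj_iff_exists]
  by_cases hef : s(a, b) = f
  · subst hef
    norm_num
  · have hnot : ¬(a ∈ f ∧ b ∈ f) := fun h => hef ((Sym2.mem_and_mem_iff hab.ne).mp h).symm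
    by_cases ha : a ∈ f <;> by_cases hb : b ∈ f <;> simp_all

theorem edgeIncMatrix_mul_transpose :
    G.edgeIncMatrix ℝ * (G.edgeIncMatrix ℝ)ᵀ =
      G.adjMatrix ℝ + diagonal fun v => (G.degree v : ℝ) := by
  ext a b
  have hsum : ∀ g : Sym2 V → ℝ, (∀ e ∉ G.edgeSet, g e = 0) →
      ∑ e : G.edgeSet, g e = ∑ e, g e := fun g hg => by
    rw [← Finset.sum_subtype (G.edgeFinset) (fun e => mem_edgeFinset)]
    exact Finset.sum_subset (Finset.subset_univ _) fun e _ he =>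
      hg e (fun h => he (mem_edgeFinset.mpr h))
  rw [Matrix.mul_apply]
  simp only [edgeIncMatrix, transpose_apply, of_apply]
  rw [hsum fun e => G.incMatrix ℝ a e * G.incMatrix ℝ b e,
    show ∑ e, G.incMatrix ℝ a e * G.incMatrix ℝ b e = (G.incMatrix ℝ * (G.incMatrix ℝ)ᵀ) a b by
      simp [Matrix.mul_apply], incMatrix_mul_transpose]
  · by_cases hab : a = b
    · subst hab; simp
    · by_cases h : G.Adj a b <;> simp [hab, h]
  · intro e he
    rw [G.incMatrix_of_notMem_incidenceSet fun h => he h.1, zero_mul]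

end LineGraph

section Potential

variable [DecidableEq V] (G) [DecidableRel G.Adj] {K : Type*} [Field K]

noncomputable def adjAddDiagKer (d : V → K) : Submodule K (V → K) :=
  LinearMap.ker (G.adjMatrix K + diagonal d).mulVecLin

theorem finrank_ker_lineAdjMat [Fintype G.edgeSet] :
    Module.finrank ℝ (LinearMap.ker (lineAdjMat G).mulVecLin) =
      Module.finrank ℝ (G.adjAddDiagKer fun v => (G.degree v : ℝ) - 2) := by
  have hsub : G.adjMatrix ℝ + diagonal (fun v => (G.degree v : ℝ) - 2) =
      G.edgeIncMatrix ℝ * (G.edgeIncMatrix ℝ)ᵀ - (2 : ℝ) • 1 := by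
    rw [edgeIncMatrix_mul_transpose]
    ext a b
    by_cases hab : a = b
    · subst hab; simp
    · simp [hab]
  rw [lineAdjMat_eq_transpose_mul_sub, adjAddDiagKer, hsub]
  exact Matrix.finrank_ker_mul_sub_smul_comm _ _ two_ne_zero

variable {G}

theorem mem_adjAddDiagKer {d : V → K} {s : V → K} :
    s ∈ G.adjAddDiagKer d ↔ ∀ v, ∑ u ∈ G.neighborFinset v, s u + d v * s v = 0 := by
  simp [adjAddDiagKer, funext_iff, adjMatrix_mulVec_apply, mulVec_diagonal]

theorem mem_adjAddDiagKer_deleteIncidenceSet {a : V} {d s : V → K} :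
    s ∈ (G.deleteIncidenceSet a).adjAddDiagKer d ↔
      d a * s a = 0 ∧ ∀ x ≠ a, ∑ y ∈ (G.neighborFinset x).erase a, s y + d x * s x = 0 := by
  rw [mem_adjAddDiagKer, ← and_forall_ne a]
  refine and_congr (by simp [neighborFinset_deleteIncidenceSet]) (forall₂_congr fun x hx => ?_)
  rw [neighborFinset_deleteIncidenceSet, if_neg hx]

theorem mem_adjAddDiagKer_of_neighborFinset_eq {v₀ u₀ : V} (hleaf : G.neighborFinset v₀ = {u₀})
    {d s : V → K} :
    s ∈ G.adjAddDiagKer d ↔ s u₀ + d v₀ * s v₀ = 0 ∧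
      ∀ x ≠ v₀, ∑ y ∈ (G.neighborFinset x).erase v₀, s y + (if x = u₀ then s v₀ else 0) +
        d x * s x = 0 := by
  rw [mem_adjAddDiagKer, ← and_forall_ne v₀]
  refine and_congr (by rw [hleaf, Finset.sum_singleton]) (forall₂_congr fun x hx => ?_)
  have hmem : v₀ ∈ G.neighborFinset x ↔ x = u₀ := by
    rw [mem_neighborFinset, adj_comm, ← mem_neighborFinset, hleaf, Finset.mem_singleton]
  split_ifs with hxu
  · rw [Finset.sum_erase_add _ _ (hmem.mpr hxu)]
  · rw [add_zero, Finset.erase_eq_of_notMem (mt hmem.mp hxu)]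

theorem apply_eq_of_mem_adjAddDiagKer_of_neighborFinset_eq {v₀ u₀ : V}
    (hleaf : G.neighborFinset v₀ = {u₀}) {d s : V → K} (hd : d v₀ ≠ 0)
    (hs : s ∈ G.adjAddDiagKer d) : s v₀ = -(d v₀)⁻¹ * s u₀ := by
  have h := ((mem_adjAddDiagKer_of_neighborFinset_eq hleaf).mp hs).1
  calc s v₀ = (d v₀)⁻¹ * (d v₀ * s v₀) := (inv_mul_cancel_left₀ hd _).symm
    _ = -(d v₀)⁻¹ * s u₀ := by rw [show d v₀ * s v₀ = -s u₀ by linear_combination h]; ring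

theorem updateCoord_mem_adjAddDiagKer_deleteIncidenceSet {v₀ u₀ : V}
    (hleaf : G.neighborFinset v₀ = {u₀}) {d s : V → K} (hd : d v₀ ≠ 0)
    (hs : s ∈ G.adjAddDiagKer d) :
    updateCoord v₀ u₀ 0 s ∈
      (G.deleteIncidenceSet v₀).adjAddDiagKer (Function.update d u₀ (d u₀ - (d v₀)⁻¹)) := by
  have h := ((mem_adjAddDiagKer_of_neighborFinset_eq hleaf).mp hs).2
  refine mem_adjAddDiagKer_deleteIncidenceSet.mpr ⟨by simp [updateCoord_apply], fun x hx => ?_⟩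
  rw [updateCoord_apply, Finset.sum_update_of_notMem (Finset.notMem_erase _ _),
    Function.update_of_ne hx]
  rcases eq_or_ne x u₀ with rfl | hxu
  · have := h x hx
    rw [if_pos rfl, apply_eq_of_mem_adjAddDiagKer_of_neighborFinset_eq hleaf hd hs] at this
    rw [Function.update_self]
    linear_combination this
  · simpa [hxu] using h x hx

theorem updateCoord_mem_adjAddDiagKer {v₀ u₀ : V} (hleaf : G.neighborFinset v₀ = {u₀})
    {d t : V → K} (hd : d v₀ ≠ 0)
    (ht : t ∈ (G.deleteIncidenceSet v₀).adjAddDiagKer (Function.update d u₀ (d u₀ - (d v₀)⁻¹))) :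
    updateCoord v₀ u₀ (-(d v₀)⁻¹) t ∈ G.adjAddDiagKer d := by
  have hvu : v₀ ≠ u₀ := (adj_of_neighborFinset_eq_singleton hleaf).ne
  have h := (mem_adjAddDiagKer_deleteIncidenceSet.mp ht).2
  refine (mem_adjAddDiagKer_of_neighborFinset_eq hleaf).mpr ⟨?_, fun x hx => ?_⟩
  · simp only [updateCoord_apply, Function.update_self, Function.update_of_ne hvu.symm]
    field_simp
    ring
  rw [updateCoord_apply, Finset.sum_update_of_notMem (Finset.notMem_erase _ _),
    Function.update_of_ne hx]
  rcases eq_or_ne x u₀ with rfl | hxu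
  · have := h x hx
    rw [Function.update_self] at this
    rw [if_pos rfl, Function.update_self]
    linear_combination this
  · simpa [hxu] using h x hx

/-- The equation at the leaf `v₀` expresses `s v₀` through `s u₀`; substituting it into the
equation at `u₀` shifts the potential there by `-(d v₀)⁻¹`. -/
theorem finrank_adjAddDiagKer_deleteIncidenceSet {v₀ u₀ : V} (hleaf : G.neighborFinset v₀ = {u₀})
    {d : V → K} (hd : d v₀ ≠ 0) :
    Module.finrank K ((G.deleteIncidenceSet v₀).adjAddDiagKer
        (Function.update d u₀ (d u₀ - (d v₀)⁻¹))) =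
      Module.finrank K (G.adjAddDiagKer d) := by
  have hvu : v₀ ≠ u₀ := (adj_of_neighborFinset_eq_singleton hleaf).ne
  have hnew : ∀ t ∈ (G.deleteIncidenceSet v₀).adjAddDiagKer
      (Function.update d u₀ (d u₀ - (d v₀)⁻¹)), t v₀ = 0 * t u₀ := fun t ht => by
    have h := (mem_adjAddDiagKer_deleteIncidenceSet.mp ht).1
    rw [Function.update_of_ne hvu] at h
    rw [zero_mul]
    exact (mul_eq_zero.mp h).resolve_left hd
  symm
  refine LinearEquiv.finrank_eq (LinearEquiv.ofLinearMap
    (f := (updateCoord v₀ u₀ 0).restrict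
      fun _ => updateCoord_mem_adjAddDiagKer_deleteIncidenceSet hleaf hd)
    (g := (updateCoord v₀ u₀ (-(d v₀)⁻¹)).restrict fun _ => updateCoord_mem_adjAddDiagKer hleaf hd)
    ?_ ?_)
  · refine LinearMap.ext fun t => Subtype.ext ?_
    simp only [LinearMap.comp_apply, LinearMap.coe_restrict_apply, LinearMap.id_coe, id,
      updateCoord_updateCoord hvu]
    exact updateCoord_eq_self (hnew t t.2)
  · refine LinearMap.ext fun s => Subtype.ext ?_
    simp only [LinearMap.comp_apply, LinearMap.coe_restrict_apply, LinearMap.id_coe, id,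
      updateCoord_updateCoord hvu]
    exact updateCoord_eq_self (apply_eq_of_mem_adjAddDiagKer_of_neighborFinset_eq hleaf hd s.2)

theorem Walk.IsCycle.apply_getVert_add_two {v : V} {w : G.Walk v v} (hw : w.IsCycle)
    (hdeg : ∀ y, G.degree y ≤ 2) {d s : V → K} (hs : s ∈ G.adjAddDiagKer d) {i : ℕ}
    (hi : i + 2 ≤ w.length) :
    s (w.getVert (i + 2)) = -s (w.getVert i) - d (w.getVert (i + 1)) * s (w.getVert (i + 1)) := by
  have h := mem_adjAddDiagKer.mp hs (w.getVert (i + 1))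
  rw [hw.neighborFinset_getVert_succ hi (hdeg _),
    Finset.sum_pair (hw.getVert_ne_getVert_add_two hi)] at h
  linear_combination h

theorem Walk.IsCycle.eq_zero_of_mem_adjAddDiagKer {v : V} {w : G.Walk v v} (hw : w.IsCycle)
    (hdeg : ∀ y, G.degree y ≤ 2) (hreach : ∀ x, G.degree x ≠ 0 → G.Reachable v x) {d s : V → K}
    (hiso : ∀ x, G.degree x = 0 → d x ≠ 0) (hs : s ∈ G.adjAddDiagKer d)
    (h0 : s (w.getVert 0) = 0) (h1 : s (w.getVert 1) = 0) : s = 0 := by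
  funext x
  by_cases hx : G.degree x = 0
  · have h := mem_adjAddDiagKer.mp hs x
    rw [Finset.card_eq_zero.mp ((card_neighborFinset_eq_degree G x).trans hx),
      Finset.sum_empty, zero_add] at h
    exact (mul_eq_zero.mp h).resolve_left (hiso x hx)
  · obtain ⟨i, rfl, hi⟩ := hw.exists_getVert_eq_of_reachable hdeg (hreach x hx)
    exact eq_of_perturbedRec_step (e := fun i => d (w.getVert i)) (y := fun i => s (w.getVert i))
      (z := 0)
      (fun _ => hw.apply_getVert_add_two hdeg hs) (fun _ _ => by simp) h0 h1 i hi

theorem Walk.IsCycle.four_dvd_length_of_degree_le_two {v : V} {w : G.Walk v v} (hw : w.IsCycle)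
    (hdeg : ∀ x, G.degree x ≤ 2) (hreach : ∀ x, G.degree x ≠ 0 → G.Reachable v x) {d : V → ℚ}
    (hd : ∀ x ∈ w.support, padicNorm 2 (d x) ≤ 1 / 2) (hiso : ∀ x, G.degree x = 0 → d x ≠ 0)
    (hK : Module.finrank ℝ (G.adjAddDiagKer fun x => (d x : ℝ)) = 2) : 4 ∣ w.length := by
  set K := G.adjAddDiagKer fun x => (d x : ℝ)
  let φ : K →ₗ[ℝ] ℝ × ℝ :=
    ((LinearMap.proj (w.getVert 0)).prod (LinearMap.proj (w.getVert 1))) ∘ₗ K.subtype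
  have hφ : Function.Injective φ := by
    refine (injective_iff_map_eq_zero φ).mpr fun s hs => Subtype.ext ?_
    simp only [φ, LinearMap.comp_apply, LinearMap.prod_apply, Function.prod, LinearMap.proj_apply,
      Submodule.subtype_apply, Prod.mk_eq_zero] at hs
    exact hw.eq_zero_of_mem_adjAddDiagKer hdeg hreach (by exact_mod_cast hiso) s.2 hs.1 hs.2
  -- `dim K = 2` makes `φ` onto, so the solution starting with `1, 0` closes up around the cycle
  obtain ⟨σ, hσ⟩ := ((LinearMap.injective_iff_surjective_of_finrank_eq_finrank
    (by rw [hK, Module.finrank_prod, Module.finrank_self])).mp hφ) (1, 0)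
  simp only [φ, LinearMap.comp_apply, LinearMap.prod_apply, Function.prod, LinearMap.proj_apply,
    Submodule.subtype_apply, Prod.mk.injEq, Walk.getVert_zero] at hσ
  set e : ℕ → ℚ := fun i => d (w.getVert i)
  have hσ_rec : ∀ i ≤ w.length, σ.1 (w.getVert i) = ((perturbedRec e i : ℚ) : ℝ) := by
    simp only [← Rat.coe_castHom, map_perturbedRec]
    exact eq_of_perturbedRec_step (fun _ => hw.apply_getVert_add_two hdeg σ.2) (fun _ _ => rfl)
      (by simpa [perturbedRec] using hσ.1) (by simpa [perturbedRec] using hσ.2)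
  have hper : perturbedRec e w.length = 1 := by
    have h := hσ_rec w.length le_rfl
    rw [Walk.getVert_length, hσ.1] at h
    exact_mod_cast h.symm
  exact four_dvd_of_perturbedRec_eq_one (fun i => hd _ (w.getVert_mem_support i)) hper

end Potential

/-- The state reached by pruning leaves: the pruned leaves stay behind as isolated vertices. -/
structure IsAdmissiblePotential (G : SimpleGraph V) [DecidableRel G.Adj] (v : V) (d : V → ℚ) :
    Prop where
  card_edgeFinset : #G.edgeFinset = #{x | G.degree x ≠ 0}
  reachable : ∀ x, G.degree x ≠ 0 → G.Reachable v x
  padicNorm_sub_degree_le : ∀ x, G.degree x ≠ 0 → padicNorm 2 (d x - G.degree x) ≤ 1 / 2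
  ne_zero : ∀ x, G.degree x = 0 → d x ≠ 0

variable [DecidableRel G.Adj] {v v₀ u₀ : V} {d : V → ℚ}

namespace IsAdmissiblePotential

theorem padicNorm_sub_one_lt (h : G.IsAdmissiblePotential v d) (hv₀ : G.degree v₀ = 1) :
    padicNorm 2 (d v₀ - 1) < 1 := by
  have := h.padicNorm_sub_degree_le v₀ (by omega)
  rw [hv₀, Nat.cast_one] at this
  linarith

variable [DecidableEq V]

theorem two_le_degree_of_neighborFinset_eq (h : G.IsAdmissiblePotential v d) {w : G.Walk v v}
    (hw : w.IsCycle) (hN : G.neighborFinset v₀ = {u₀}) : 2 ≤ G.degree u₀ := by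
  have hadj := adj_of_neighborFinset_eq_singleton hN
  have hv₀ : G.degree v₀ = 1 := by rw [← card_neighborFinset_eq_degree, hN, Finset.card_singleton]
  rcases eq_or_ne u₀ v with rfl | hu₀v
  · exact hw.two_le_degree w.start_mem_support
  -- a path from `v₀` to `v` has to leave the leaf `v₀` through `u₀`
  let p := (h.reachable v₀ (by omega)).some.reverse.toPath
  have hnil : ¬p.1.Nil := Walk.not_nil_of_ne fun hv => by
    subst hv
    have := hw.two_le_degree w.start_mem_support
    omega
  have hsnd : p.1.snd = u₀ := Finset.mem_singleton.mp (hN ▸ (mem_neighborFinset _ _ _).mpr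
    (Walk.adj_snd hnil))
  exact p.2.two_le_degree (hsnd ▸ p.1.getVert_mem_support 1) hadj.ne.symm hu₀v

theorem deleteIncidenceSet (h : G.IsAdmissiblePotential v d) {w : G.Walk v v} (hw : w.IsCycle)
    (hN : G.neighborFinset v₀ = {u₀}) :
    (G.deleteIncidenceSet v₀).IsAdmissiblePotential v
      (Function.update d u₀ (d u₀ - (d v₀)⁻¹)) := by
  have hv₀ : G.degree v₀ = 1 := by rw [← card_neighborFinset_eq_degree, hN, Finset.card_singleton]
  have hu₀ := h.two_le_degree_of_neighborFinset_eq hw hN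
  have hdeg := degree_deleteIncidenceSet_of_neighborFinset_eq hN
  have hvu : v₀ ≠ u₀ := by rintro rfl; omega
  have hvv₀ : v ≠ v₀ := by rintro rfl; have := hw.two_le_degree w.start_mem_support; omega
  have hd₀ := padicNorm_inv_sub_one (h.padicNorm_sub_one_lt hv₀)
  have hsupp := degree_deleteIncidenceSet_ne_zero_iff hN hu₀
  constructor
  · rw [card_edgeFinset_deleteIncidenceSet, h.card_edgeFinset, hv₀,
      show ({x | (G.deleteIncidenceSet v₀).degree x ≠ 0} : Finset V) =
        ({x | G.degree x ≠ 0} : Finset V).erase v₀ by ext x; simp [hsupp, and_comm],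
      Finset.card_erase_of_mem (by simp; omega)]
  · intro x hx
    obtain ⟨hx, hxv⟩ := (hsupp x).mp hx
    exact (h.reachable x hx).deleteIncidenceSet hvv₀ hxv (by omega)
  · intro x hx
    obtain ⟨hx, hxv⟩ := (hsupp x).mp hx
    have hdx := h.padicNorm_sub_degree_le x hx
    rw [hdeg, if_neg hxv]
    rcases eq_or_ne x u₀ with rfl | hxu
    · rw [if_pos rfl, Function.update_self, Nat.cast_sub (by omega), Nat.cast_one,
        show d x - (d v₀)⁻¹ - (G.degree x - 1) = (d x - G.degree x) - ((d v₀)⁻¹ - 1) by ring]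
      refine padicNorm.sub.trans (max_le hdx ?_)
      have := h.padicNorm_sub_degree_le v₀ (by omega)
      rw [hd₀.2]
      simpa [hv₀] using this
    · rwa [if_neg hxu, Function.update_of_ne hxu]
  · intro x hx
    rcases eq_or_ne x v₀ with rfl | hxv
    · rw [Function.update_of_ne hvu]
      exact hd₀.1
    have hx : G.degree x = 0 := by
      by_contra hx'
      exact (hsupp x).mpr ⟨hx', hxv⟩ hx
    rw [Function.update_of_ne (by rintro rfl; omega)]
    exact h.ne_zero x hx

theorem four_dvd_length (h : G.IsAdmissiblePotential v d)
    {w : G.Walk v v} (hw : w.IsCycle)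
    (hK : Module.finrank ℝ (G.adjAddDiagKer fun x => (d x : ℝ)) = 2) : 4 ∣ w.length := by
  induction hn : #G.edgeFinset using Nat.strong_induction_on generalizing G d with
  | _ n ih =>
  by_cases hleaf : ∃ v₀, G.degree v₀ = 1
  · obtain ⟨v₀, hv₀⟩ := hleaf
    obtain ⟨u₀, hN⟩ := Finset.card_eq_one.mp ((card_neighborFinset_eq_degree G v₀).trans hv₀)
    have hv₀w : v₀ ∉ w.support := fun hx => by have := hw.two_le_degree hx; omega
    have hd₀ : (d v₀ : ℝ) ≠ 0 := by
      exact_mod_cast (padicNorm_inv_sub_one (h.padicNorm_sub_one_lt hv₀)).1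
    have hcast : (fun x => ((Function.update d u₀ (d u₀ - (d v₀)⁻¹) x : ℚ) : ℝ)) =
        Function.update (fun x => (d x : ℝ)) u₀ ((d u₀ : ℝ) - (d v₀ : ℝ)⁻¹) := by
      ext x
      rcases eq_or_ne x u₀ with rfl | hx <;> simp [*]
    have hlt : #(G.deleteIncidenceSet v₀).edgeFinset < n := by
      have : 0 < #G.edgeFinset := by
        rw [h.card_edgeFinset]
        exact Finset.card_pos.mpr ⟨v₀, by simp [hv₀]⟩
      rw [card_edgeFinset_deleteIncidenceSet, hv₀]
      omega
    have := ih _ hlt (h.deleteIncidenceSet hw hN)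
      (hw.transfer fun _ => Walk.mem_edgeSet_deleteIncidenceSet hv₀w)
      (by rw [hcast, finrank_adjAddDiagKer_deleteIncidenceSet hN hd₀, hK]) rfl
    rwa [Walk.length_transfer] at this
  · push Not at hleaf
    have hdeg := degree_le_two_of_card_edgeFinset_eq h.card_edgeFinset hleaf
    refine hw.four_dvd_length_of_degree_le_two hdeg h.reachable (fun x hx => ?_) h.ne_zero hK
    have hx2 : G.degree x = 2 := le_antisymm (hdeg x) (hw.two_le_degree hx)
    have := h.padicNorm_sub_degree_le x (by omega)
    rw [hx2, Nat.cast_two] at this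
    simpa using (padicNorm.nonarchimedean (p := 2) (q := d x - 2) (r := 2)).trans
      (max_le this padicNorm_two_two.le)

end IsAdmissiblePotential

end SimpleGraph

open SimpleGraph in
theorem stmt18 {V : Type*} [Fintype V] [DecidableEq V] (G : SimpleGraph V)
    [Fintype G.edgeSet] (hG : G.Connected)
    -- `G` is unicyclic: connected with as many edges as vertices
    (huni : Fintype.card G.edgeSet = Fintype.card V)
    -- the nullity of `A(L(G))` is exactly `2`
    (hnull : Module.finrank ℝ (LinearMap.ker (lineAdjMat G).mulVecLin) = 2) :
    -- the length of the unique cycle of `G` is divisible by `4`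
    ∀ (v : V) (w : G.Walk v v), w.IsCycle → 4 ∣ w.length := by
  intro v w hw
  classical
  have : Nontrivial V := ⟨⟨v, w.snd, G.ne_of_adj (w.adj_snd hw.not_nil)⟩⟩
  have hdeg : ∀ x, G.degree x ≠ 0 := fun x => (hG.preconnected.degree_pos_of_nontrivial x).ne'
  refine IsAdmissiblePotential.four_dvd_length (d := fun x => (G.degree x : ℚ) - 2)
    ⟨?_, fun x _ => hG.preconnected v x, fun x _ => ?_, fun x hx => absurd hx (hdeg x)⟩ hw ?_
  · rw [Finset.filter_true_of_mem fun x _ => hdeg x, Finset.card_univ, ← huni]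
    convert G.edgeFinset_card
  · rw [sub_sub_cancel_left, padicNorm.neg, padicNorm_two_two]
  · rw [← hnull, finrank_ker_lineAdjMat]
    congr 3 with x <;> push_cast <;> rfl
end
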